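/- arXiv:0806.4360 — 5 statements merged into one kernel-verified Lean document; each statement's English description precedes it below -/
import Mathlib

section
/- Let V and W be real vector spaces, b : V × V → W a symmetric bilinear map, and μ : V → ℝ a linear functional. Suppose the trilinear map T(x,y,z) := μ(x)·b(y,z) is totally symmetric in x, y, z. If there exist vectors t₁,t₂,t₃,t₄ ∈ V such that b(t₁,t₂) and b(t₃,t₄) are linearly independent, then μ = 0. -/
theorem stmt_2 {V W : Type*} [AddCommGroup V] [Module ℝ V] [AddCommGroup W] [Module ℝ W]
    (b : V →ₗ[ℝ] V →ₗ[ℝ] W) (hb : ∀ x y, b x y = b y x)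
    (μ : V →ₗ[ℝ] ℝ)
    (hsym : ∀ x y z, μ x • b y z = μ y • b x z ∧ μ x • b y z = μ z • b y x)
    (t₁ t₂ t₃ t₄ : V) (hli : LinearIndependent ℝ ![b t₁ t₂, b t₃ t₄]) :
    μ = 0 := by
  ext x
  simp only [LinearMap.zero_apply]
  by_contra hx
  have key : ∀ y z, (μ x * μ x) • b y z = (μ y * μ z) • b x x := by
    intro y z
    calc (μ x * μ x) • b y z = μ x • (μ x • b y z) := (smul_smul _ _ _).symm
      _ = μ x • (μ y • b x z) := by rw [(hsym x y z).1]
      _ = μ y • (μ x • b x z) := smul_comm _ _ _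
      _ = μ y • (μ z • b x x) := by rw [(hsym x x z).2]
      _ = (μ y * μ z) • b x x := smul_smul _ _ _
  set k := μ x * μ x with hk
  have hk0 : k ≠ 0 := mul_ne_zero hx hx
  rw [LinearIndependent.pair_iff] at hli
  have e1 := key t₁ t₂
  have e2 := key t₃ t₄
  have hcomb : (μ t₃ * μ t₄ * k) • b t₁ t₂ + (-(μ t₁ * μ t₂ * k)) • b t₃ t₄ = 0 := by
    have h1 : (μ t₃ * μ t₄ * k) • b t₁ t₂ = (μ t₃ * μ t₄) • ((μ t₁ * μ t₂) • b x x) := by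
      rw [mul_smul, e1]
    have h2 : (μ t₁ * μ t₂ * k) • b t₃ t₄ = (μ t₁ * μ t₂) • ((μ t₃ * μ t₄) • b x x) := by
      rw [mul_smul, e2]
    rw [neg_smul, h1, h2, smul_smul, smul_smul, mul_comm (μ t₃ * μ t₄)]
    abel
  have hc := hli _ _ hcomb
  have h34 : μ t₃ * μ t₄ = 0 := by
    rcases mul_eq_zero.mp hc.1 with h | h
    · exact h
    · exact absurd h hk0
  have hz : b t₃ t₄ = 0 := by
    have : k • b t₃ t₄ = 0 := by rw [e2, h34, zero_smul]
    exact (smul_eq_zero.mp this).resolve_left hk0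
  have := (hli 0 1 (by rw [hz]; simp)).2
  exact one_ne_zero this
end

section
/- Let V, W be real vector spaces, b : V × V → W symmetric bilinear with b ≠ 0, and μ : V → ℝ a nonzero linear functional such that μ(x)b(y,z) is totally symmetric in x,y,z. Then the image of b spans a one-dimensional subspace of W, i.e., there exists a nonzero w ∈ W such that every b(x,y) is a scalar multiple of w. -/
theorem stmt_3 {V W : Type*} [AddCommGroup V] [Module ℝ V] [AddCommGroup W] [Module ℝ W]
    (b : V →ₗ[ℝ] V →ₗ[ℝ] W) (hb : ∀ x y, b x y = b y x) (hb0 : b ≠ 0)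
    (μ : V →ₗ[ℝ] ℝ) (hμ : μ ≠ 0)
    (hsym : ∀ x y z, μ x • b y z = μ y • b x z ∧ μ x • b y z = μ z • b y x) :
    ∃ w : W, w ≠ 0 ∧ ∀ x y, ∃ c : ℝ, b x y = c • w := by
  obtain ⟨x₀, hx₀⟩ : ∃ x, μ x ≠ 0 := by
    by_contra h
    push_neg at h
    exact hμ (LinearMap.ext fun x => h x)
  have key : ∀ y z, b y z = ((μ y * μ z) / (μ x₀ * μ x₀)) • b x₀ x₀ := by
    intro y z
    have h1 : μ x₀ • b y z = μ y • b x₀ z := (hsym x₀ y z).1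
    have h2 : μ x₀ • b x₀ z = μ z • b x₀ x₀ := (hsym x₀ x₀ z).2
    have h3 : (μ x₀ * μ x₀) • b y z = (μ y * μ z) • b x₀ x₀ := by
      calc (μ x₀ * μ x₀) • b y z = μ x₀ • (μ x₀ • b y z) := (mul_smul _ _ _)
        _ = μ x₀ • (μ y • b x₀ z) := by rw [h1]
        _ = μ y • (μ x₀ • b x₀ z) := smul_comm _ _ _
        _ = μ y • (μ z • b x₀ x₀) := by rw [h2]
        _ = (μ y * μ z) • b x₀ x₀ := (mul_smul _ _ _).symm
    have hx2 : (μ x₀ * μ x₀) ≠ 0 := mul_ne_zero hx₀ hx₀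
    rw [div_eq_mul_inv, mul_comm, mul_smul, ← h3, ← mul_smul, inv_mul_cancel₀ hx2, one_smul]
  refine ⟨b x₀ x₀, ?_, fun x y => ⟨_, key x y⟩⟩
  intro hw
  apply hb0
  ext y z
  simp [key y z, hw]
end

section
/- Let V be an n-dimensional real inner product space, A a nonzero self-adjoint endomorphism satisfying (trace A)·A = A². Set k = trace A. Then V decomposes as an orthogonal direct sum V = L₁ ⊕ L₂ where L₁ = ker(A − k·id) is one-dimensional and L₂ = ker A is (n−1)-dimensional. -/
open RealInnerProductSpace

theorem stmt_7 {V : Type*} [NormedAddCommGroup V] [InnerProductSpace ℝ V]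
    [FiniteDimensional ℝ V] {n : ℕ} (hn : 2 ≤ n) (hdim : Module.finrank ℝ V = n)
    (A : V →ₗ[ℝ] V) (hA : A.IsSymmetric) (hA0 : A ≠ 0)
    (h : (LinearMap.trace ℝ V A) • A = A ∘ₗ A) :
    let k := LinearMap.trace ℝ V A
    let L₁ := LinearMap.ker (A - k • LinearMap.id)
    let L₂ := LinearMap.ker A
    (∀ x ∈ L₁, ∀ y ∈ L₂, ⟪x, y⟫ = 0) ∧ IsCompl L₁ L₂ ∧
    Module.finrank ℝ L₁ = 1 ∧ Module.finrank ℝ L₂ = n - 1 := by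
  intro k L₁ L₂
  have hpt : ∀ x, k • A x = A (A x) := fun x => by
    have := congrArg (fun f => f x) h
    simpa using this
  -- k ≠ 0
  have hk : k ≠ 0 := by
    intro hk0
    apply hA0
    ext x
    have h2 : A (A x) = 0 := by rw [← hpt x, hk0, zero_smul]
    have : ⟪A x, A x⟫ = 0 := by
      rw [← hA (A x) x, h2, inner_zero_left]
    simpa using inner_self_eq_zero.mp this
  have memL₁ : ∀ x, x ∈ L₁ ↔ A x = k • x := by
    intro x
    simp [L₁, LinearMap.mem_ker, sub_eq_zero]
  -- orthogonality
  have horth : ∀ x ∈ L₁, ∀ y ∈ L₂, ⟪x, y⟫ = 0 := by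
    intro x hx y hy
    have hx' : A x = k • x := (memL₁ x).mp hx
    have hy' : A y = 0 := hy
    have : k * ⟪x, y⟫ = 0 := by
      calc k * ⟪x, y⟫ = ⟪k • x, y⟫ := (real_inner_smul_left x y k).symm
        _ = ⟪A x, y⟫ := by rw [hx']
        _ = ⟪x, A y⟫ := hA x y
        _ = 0 := by rw [hy', inner_zero_right]
    exact (mul_eq_zero.mp this).resolve_left hk
  -- membership facts
  have hAx₁ : ∀ x, k⁻¹ • A x ∈ L₁ := by
    intro x
    rw [memL₁]
    rw [map_smul, ← hpt x, smul_smul, smul_smul, mul_comm]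
  have hcompl : IsCompl L₁ L₂ := by
    constructor
    · rw [disjoint_iff]
      ext x
      simp only [Submodule.mem_inf, Submodule.mem_bot]
      constructor
      · rintro ⟨h1, h2⟩
        have hx' : A x = k • x := (memL₁ x).mp h1
        have : k • x = 0 := by rw [← hx']; exact h2
        exact (smul_eq_zero.mp this).resolve_left hk
      · rintro rfl; simp
    · rw [codisjoint_iff]
      ext x
      simp only [Submodule.mem_top, iff_true]
      have hx2 : x - k⁻¹ • A x ∈ L₂ := by
        simp only [L₂, LinearMap.mem_ker, map_sub, map_smul]
        rw [← hpt x, smul_smul, inv_mul_cancel₀ hk, one_smul, sub_self]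
      have : x = (k⁻¹ • A x) + (x - k⁻¹ • A x) := by ring_nf; abel
      rw [this]
      exact Submodule.add_mem_sup (hAx₁ x) hx2
  -- finrank L₁ = 1 via projection trace
  have hproj : LinearMap.IsProj L₁ (k⁻¹ • A) := by
    constructor
    · intro x; exact hAx₁ x
    · intro x hx
      have hx' : A x = k • x := (memL₁ x).mp hx
      simp only [LinearMap.smul_apply, hx', smul_smul, inv_mul_cancel₀ hk, one_smul]
  have htr : LinearMap.trace ℝ V (k⁻¹ • A) = (Module.finrank ℝ L₁ : ℝ) :=
    hproj.trace
  have htr' : LinearMap.trace ℝ V (k⁻¹ • A) = 1 := by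
    rw [map_smul, smul_eq_mul, inv_mul_cancel₀ hk]
  have hr1 : Module.finrank ℝ L₁ = 1 := by
    have : (Module.finrank ℝ L₁ : ℝ) = 1 := by rw [← htr, htr']
    exact_mod_cast this
  refine ⟨horth, hcompl, hr1, ?_⟩
  have hsum := Submodule.finrank_add_eq_of_isCompl hcompl
  rw [hr1, hdim] at hsum
  omega
end

section
/- Let V be an n-dimensional real inner product space (n ≥ 2) and A ≠ 0 a self-adjoint endomorphism with (trace A)·A = A². Then the quadratic form x ↦ ⟨Ax, x⟩ equals (trace A)·⟨Px, x⟩ where P is orthogonal projection onto the one-dimensional subspace im A; in particular ⟨Ax,x⟩ has the same sign as trace A for all x, or is zero. -/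
open RealInnerProductSpace

/-! If `trace A = 0` then `A ∘ A = 0`, which kills a symmetric `A` since `⟪A x, A x⟫ = ⟪A (A x), x⟫`.
So `P = (trace A)⁻¹ • A` is a symmetric idempotent of trace `1`, and the trace of an idempotent is
its rank. Positivity: `(trace A) * ⟪A x, x⟫ = ⟪A (A x), x⟫ = ‖A x‖²`. -/

namespace LinearMap

theorem IsSymmetric.eq_zero_of_comp_self_eq_zero {𝕜 E : Type*} [RCLike 𝕜]
    [NormedAddCommGroup E] [InnerProductSpace 𝕜 E] {A : E →ₗ[𝕜] E} (hA : A.IsSymmetric)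
    (h : A ∘ₗ A = 0) : A = 0 := by
  ext x
  have : inner 𝕜 (A x) (A x) = 0 := by
    rw [← hA, ← comp_apply, h, zero_apply, inner_zero_left]
  simpa using this

theorem IsSymmetric.ne_zero_of_smul_eq_comp_self {𝕜 E : Type*} [RCLike 𝕜]
    [NormedAddCommGroup E] [InnerProductSpace 𝕜 E] {A : E →ₗ[𝕜] E} (hA : A.IsSymmetric)
    (hA0 : A ≠ 0) {c : 𝕜} (h : c • A = A ∘ₗ A) : c ≠ 0 := by
  rintro rfl
  exact hA0 (hA.eq_zero_of_comp_self_eq_zero (by rw [← h, zero_smul]))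

theorem isIdempotentElem_inv_smul_of_smul_eq_comp_self {K M : Type*} [Field K]
    [AddCommGroup M] [Module K M] {A : M →ₗ[K] M} {c : K} (hc : c ≠ 0)
    (h : c • A = A ∘ₗ A) : IsIdempotentElem (c⁻¹ • A) := by
  rw [IsIdempotentElem, Module.End.mul_eq_comp, smul_comp, comp_smul, ← h, smul_smul,
    smul_smul, inv_mul_cancel_right₀ hc]

theorem IsSymmetric.inner_comp_self_apply_nonneg {E : Type*} [NormedAddCommGroup E]
    [InnerProductSpace ℝ E] {A : E →ₗ[ℝ] E} (hA : A.IsSymmetric) (x : E) :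
    0 ≤ ⟪(A ∘ₗ A) x, x⟫ := by
  rw [comp_apply, hA]
  exact real_inner_self_nonneg

end LinearMap

theorem stmt_15_general {V : Type*} [NormedAddCommGroup V] [InnerProductSpace ℝ V]
    [FiniteDimensional ℝ V]
    (A : V →ₗ[ℝ] V) (hA : A.IsSymmetric) (hA0 : A ≠ 0)
    (h : (LinearMap.trace ℝ V A) • A = A ∘ₗ A) :
    ∃ P : V →ₗ[ℝ] V, P ∘ₗ P = P ∧ P.IsSymmetric ∧
      LinearMap.range P = LinearMap.range A ∧
      Module.finrank ℝ (LinearMap.range A) = 1 ∧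
      (∀ x, ⟪A x, x⟫ = (LinearMap.trace ℝ V A) * ⟪P x, x⟫) ∧
      (∀ x, 0 ≤ (LinearMap.trace ℝ V A) * ⟪A x, x⟫) := by
  set t := LinearMap.trace ℝ V A
  have ht : t ≠ 0 := hA.ne_zero_of_smul_eq_comp_self hA0 h
  have hP := LinearMap.isIdempotentElem_inv_smul_of_smul_eq_comp_self ht h
  have hrange : LinearMap.range (t⁻¹ • A) = LinearMap.range A :=
    LinearMap.range_smul A t⁻¹ (inv_ne_zero ht)
  refine ⟨t⁻¹ • A, hP.eq, hA.smul (by simp), hrange, ?_, fun x => ?_, fun x => ?_⟩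
  · have htrace := (LinearMap.IsIdempotentElem.isProj_range _ hP).trace
    rw [map_smul, smul_eq_mul, inv_mul_cancel₀ ht, hrange] at htrace
    exact_mod_cast htrace.symm
  · rw [LinearMap.smul_apply, real_inner_smul_left, mul_inv_cancel_left₀ ht]
  · simpa only [← real_inner_smul_left, ← LinearMap.smul_apply, h]
      using hA.inner_comp_self_apply_nonneg x

theorem stmt_15 {V : Type*} [NormedAddCommGroup V] [InnerProductSpace ℝ V]
    [FiniteDimensional ℝ V] {n : ℕ} (hn : 2 ≤ n) (hdim : Module.finrank ℝ V = n)
    (A : V →ₗ[ℝ] V) (hA : A.IsSymmetric) (hA0 : A ≠ 0)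
    (h : (LinearMap.trace ℝ V A) • A = A ∘ₗ A) :
    ∃ P : V →ₗ[ℝ] V, P ∘ₗ P = P ∧ P.IsSymmetric ∧
      LinearMap.range P = LinearMap.range A ∧
      Module.finrank ℝ (LinearMap.range A) = 1 ∧
      (∀ x, ⟪A x, x⟫ = (LinearMap.trace ℝ V A) * ⟪P x, x⟫) ∧
      (∀ x, 0 ≤ (LinearMap.trace ℝ V A) * ⟪A x, x⟫) :=
  stmt_15_general A hA hA0 h
end

section
/- Let V, W be real vector spaces, b : V × V → W symmetric bilinear with image spanning a subspace of dimension at least 2. If μ ∈ V* satisfies μ(x)b(y,z) = μ(y)b(x,z) for all x,y,z ∈ V (Codazzi-type symmetry in the first two slots of μ⊗b), and additionally μ(x)b(y,z) = μ(z)b(y,x) for all x,y,z, then μ(t₁)μ(t₂) = 0 whenever b(t₁,t₂) is not in the span of some other value b(t₃,t₄) linearly independent from it. -/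
theorem stmt_16 {V W : Type*} [AddCommGroup V] [Module ℝ V] [AddCommGroup W] [Module ℝ W]
    (b : V →ₗ[ℝ] V →ₗ[ℝ] W) (hb : ∀ x y, b x y = b y x)
    (μ : V →ₗ[ℝ] ℝ)
    (h1 : ∀ x y z, μ x • b y z = μ y • b x z)
    (h2 : ∀ x y z, μ x • b y z = μ z • b y x)
    (t₁ t₂ t₃ t₄ : V) (hli : LinearIndependent ℝ ![b t₁ t₂, b t₃ t₄]) :
    μ t₁ * μ t₂ = 0 := by
  have key : (μ t₁ * μ t₂) • b t₃ t₄ = (μ t₃ * μ t₄) • b t₁ t₂ := by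
    have e1 : μ t₃ • b t₁ t₄ = μ t₁ • b t₃ t₄ := h1 t₃ t₁ t₄
    have e2 : μ t₄ • b t₁ t₂ = μ t₂ • b t₁ t₄ := h2 t₄ t₁ t₂
    calc (μ t₁ * μ t₂) • b t₃ t₄ = μ t₂ • (μ t₁ • b t₃ t₄) := by
          rw [smul_smul, mul_comm]
      _ = μ t₃ • (μ t₂ • b t₁ t₄) := by rw [← e1, smul_comm]
      _ = μ t₃ • (μ t₄ • b t₁ t₂) := by rw [← e2]
      _ = (μ t₃ * μ t₄) • b t₁ t₂ := by rw [smul_smul]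
  have := Fintype.linearIndependent_iff.mp hli ![μ t₃ * μ t₄, -(μ t₁ * μ t₂)] ?_ 1
  · simpa using this
  · simp [Fin.sum_univ_two, key, sub_eq_zero]
end
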